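/- arXiv:1304.7427 — 4 statements merged into one kernel-verified Lean document; each statement's English description precedes it below -/
import Mathlib

section
/- Let V be a finite-dimensional real vector space equipped with a nondegenerate symmetric bilinear form ⟨·,·⟩ of signature (1, m). Let f ∈ V be a nonzero vector with ⟨f,f⟩ = 0, let v ∈ V satisfy ⟨v,v⟩ < 0, and let α > 0 be a real number. Suppose there exists x ∈ V with ⟨x,x⟩ > 0, ⟨v,x⟩ = 0, ⟨x,f⟩ > 0 and ⟨x,f⟩² = α·⟨x,x⟩. Then α·⟨v,v⟩ + ⟨v,f⟩² ≤ 0 (equivalently, −⟨v,f⟩²/⟨v,v⟩ ≤ α). In hyperbolic-geometric terms: every hyperplane (v)⊥ that meets the horosphere {y : ⟨y,y⟩ > 0, ⟨y,f⟩ > 0, ⟨y,f⟩² = α·⟨y,y⟩} satisfies −h_f(v) ≤ α, where h_f(y) := ⟨y,f⟩²/⟨y,y⟩. -/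
/-!
Because `x` is timelike, its orthogonal complement is negative semidefinite: two timelike
vectors cannot be orthogonal, by Cauchy–Schwarz in the spacelike coordinates. Cauchy–Schwarz
for `-B` on `x⊥` then applies to `v` and to the projection `f' = f - (⟨x,f⟩/⟨x,x⟩) x` of `f`,
for which `⟨v,f'⟩ = ⟨v,f⟩` and `⟨f',f'⟩ = -⟨x,f⟩²/⟨x,x⟩ = -α`; this gives `⟨v,f⟩² ≤ -α⟨v,v⟩`.
-/

open Finset

def IsLorentzBasis {V : Type*} [AddCommGroup V] [Module ℝ V] {m : ℕ}
    (B : V →ₗ[ℝ] V →ₗ[ℝ] ℝ) (b : Module.Basis (Fin (m + 1)) ℝ V) : Prop :=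
  ∀ i j, B (b i) (b j) = if i = j then (if (i : ℕ) = 0 then 1 else -1) else 0

theorem sum_mul_ne_mul_of_sum_mul_self_lt {ι : Type*} [Fintype ι] {p q : ι → ℝ} {a c : ℝ}
    (hp : ∑ i, p i * p i < a * a) (hq : ∑ i, q i * q i < c * c) :
    ∑ i, p i * q i ≠ a * c := by
  intro h
  have hcs := sum_mul_sq_le_sq_mul_sq univ p q
  have hpq := mul_lt_mul'' hp hq (sum_nonneg fun i _ => mul_self_nonneg (p i))
    (sum_nonneg fun i _ => mul_self_nonneg (q i))
  simp only [sq, h] at hcs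
  linarith

section Lorentz

variable {V : Type*} [AddCommGroup V] [Module ℝ V] {m : ℕ}
  {B : V →ₗ[ℝ] V →ₗ[ℝ] ℝ} {b : Module.Basis (Fin (m + 1)) ℝ V}

theorem IsLorentzBasis.apply_eq (hb : IsLorentzBasis B b) (y z : V) :
    B y z = b.repr y 0 * b.repr z 0 - ∑ i : Fin m, b.repr y i.succ * b.repr z i.succ := by
  unfold IsLorentzBasis at hb
  conv_lhs => rw [← b.sum_repr y, ← b.sum_repr z]
  simp only [map_sum, map_smul, LinearMap.sum_apply, LinearMap.smul_apply, hb, smul_eq_mul]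
  simp [Fin.sum_univ_succ, sub_eq_add_neg, mul_comm]

theorem IsLorentzBasis.apply_self_nonpos_of_apply_eq_zero (hb : IsLorentzBasis B b) {x w : V}
    (hx : 0 < B x x) (hwx : B w x = 0) : B w w ≤ 0 := by
  by_contra! hw
  rw [hb.apply_eq] at hx hw hwx
  exact sum_mul_ne_mul_of_sum_mul_self_lt (p := fun i : Fin m => b.repr w i.succ)
    (q := fun i : Fin m => b.repr x i.succ)
    (a := b.repr w 0) (c := b.repr x 0) (by linarith) (by linarith) (by linarith)

end Lorentz

theorem apply_mul_apply_le_of_forall_apply_self_nonpos {V : Type*} [AddCommGroup V] [Module ℝ V]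
    {B : V →ₗ[ℝ] V →ₗ[ℝ] ℝ} {x v w : V} (hneg : ∀ u, B u x = 0 → B u u ≤ 0)
    (hv : B v x = 0) (hw : B w x = 0) : B v w * B w v ≤ B v v * B w w := by
  let W := LinearMap.ker (B.flip x)
  have := LinearMap.BilinForm.apply_mul_apply_le_of_forall_zero_le
    ((-B).compl₁₂ W.subtype W.subtype) (fun u => by simpa using hneg u u.2) ⟨v, hv⟩ ⟨w, hw⟩
  simpa using this

theorem statement_0_general {V : Type*} [AddCommGroup V] [Module ℝ V] (m : ℕ)
    (B : V →ₗ[ℝ] V →ₗ[ℝ] ℝ) (hsymm : ∀ x y, B x y = B y x)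
    (b : Module.Basis (Fin (m + 1)) ℝ V)
    (hb : ∀ i j, B (b i) (b j) =
      if i = j then (if (i : ℕ) = 0 then 1 else -1) else 0)
    (f : V) (hff : B f f = 0)
    (v : V)
    (α : ℝ)
    (x : V) (hx : 0 < B x x) (hvx : B v x = 0)
    (hhoro : (B x f) ^ 2 = α * B x x) :
    α * B v v + (B v f) ^ 2 ≤ 0 := by
  set c := B x f / B x x
  have hc : c * B x x = B x f := div_mul_cancel₀ _ hx.ne'
  have hcf : c * B x f = α := by
    rw [div_mul_eq_mul_div, ← sq, hhoro, mul_div_cancel_right₀ _ hx.ne']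
  have hf'x : B (f - c • x) x = 0 := by simp [hsymm f x, hc]
  have hvf' : B v (f - c • x) = B v f := by simp [hvx]
  have hf'f' : B (f - c • x) (f - c • x) = -α := by
    simp only [map_sub, map_smul, LinearMap.sub_apply, LinearMap.smul_apply, smul_eq_mul,
      hsymm f x, hff]
    linear_combination c * hc - hcf
  have hcs := apply_mul_apply_le_of_forall_apply_self_nonpos
    (fun u hu => IsLorentzBasis.apply_self_nonpos_of_apply_eq_zero (b := b) hb hx hu) hvx hf'x
  rw [hsymm (f - c • x) v, hvf', hf'f'] at hcs
  linarith [sq (B v f)]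

/-- Let `V` be a finite-dimensional real vector space with a
nondegenerate symmetric bilinear form of signature `(1, m)` (given by a basis
in which the Gram matrix is `diag(1, -1, …, -1)`).  Let `f ≠ 0` be isotropic,
let `v` have negative norm and let `α > 0`.  If some `x` with `⟨x,x⟩ > 0`,
`⟨v,x⟩ = 0`, `⟨x,f⟩ > 0` and `⟨x,f⟩² = α⟨x,x⟩` exists, then
`α⟨v,v⟩ + ⟨v,f⟩² ≤ 0`. -/
theorem statement_0 {V : Type*} [AddCommGroup V] [Module ℝ V] (m : ℕ)
    (B : V →ₗ[ℝ] V →ₗ[ℝ] ℝ) (hsymm : ∀ x y, B x y = B y x)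
    (b : Module.Basis (Fin (m + 1)) ℝ V)
    (hb : ∀ i j, B (b i) (b j) =
      if i = j then (if (i : ℕ) = 0 then 1 else -1) else 0)
    (f : V) (hf0 : f ≠ 0) (hff : B f f = 0)
    (v : V) (hv : B v v < 0)
    (α : ℝ) (hα : 0 < α)
    (x : V) (hx : 0 < B x x) (hvx : B v x = 0) (hxf : 0 < B x f)
    (hhoro : (B x f) ^ 2 = α * B x x) :
    α * B v v + (B v f) ^ 2 ≤ 0 :=
  statement_0_general m B hsymm b hb f hff v α x hx hvx hhoro
end

section
/- Let L be an even hyperbolic lattice with positive cone P_L, let f ∈ L be a nonzero vector with f² = 0 lying in the closure of P_L in L⊗ℝ, and let V ⊆ {v ∈ L∨ : v² < 0} satisfy condition [V1]. Then there exists α > 0 such that for every v ∈ V with ⟨v,f⟩ ≠ 0 and every x ∈ P_L with ⟨x,f⟩² ≤ α·⟨x,x⟩, one has ⟨x,v⟩ ≠ 0. (Equivalently: for a sufficiently small closed horoball with base point determined by f, a hyperplane (v)⊥ with v ∈ V intersects the horoball only if it passes through the base point at infinity, i.e. only if ⟨v,f⟩ = 0.) -/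
namespace K3Aut

variable {n : ℕ}

/-- The real symmetric bilinear pairing on `L ⊗ ℝ = ℝⁿ` determined by an
integral Gram matrix `B`. -/
def pair (B : Matrix (Fin n) (Fin n) ℤ) (x y : Fin n → ℝ) : ℝ :=
  ∑ i, ∑ j, x i * (B i j : ℝ) * y j

/-- `x` is a point of the lattice `L` (integer coordinates). -/
def isLat (x : Fin n → ℝ) : Prop := ∀ i, ∃ k : ℤ, x i = (k : ℝ)

/-- `x` has rational coordinates (a point of `L ⊗ ℚ`). -/
def isRatPt (x : Fin n → ℝ) : Prop := ∀ i, ∃ q : ℚ, x i = (q : ℝ)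

/-- `x` is a point of the dual lattice `L∨ ⊆ L ⊗ ℚ`. -/
def isDual (B : Matrix (Fin n) (Fin n) ℤ) (x : Fin n → ℝ) : Prop :=
  isRatPt x ∧ ∀ y : Fin n → ℝ, isLat y → ∃ k : ℤ, pair B x y = (k : ℝ)

/-- The Gram matrix `B` is symmetric, nondegenerate and even. -/
def IsEvenLat (B : Matrix (Fin n) (Fin n) ℤ) : Prop :=
  B.IsSymm ∧ B.det ≠ 0 ∧ ∀ i, Even (B i i)

/-- The form restricted to the subspace `W` is nondegenerate with exactly one
positive direction, i.e. of signature `(1, dim W - 1)`. -/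
def IsHypOn (B : Matrix (Fin n) (Fin n) ℤ) (W : Submodule ℝ (Fin n → ℝ)) : Prop :=
  (∃ x ∈ W, 0 < pair B x x) ∧
  (∀ x ∈ W, ∀ y ∈ W, 0 < pair B x x → 0 < pair B y y →
      pair B x x * pair B y y ≤ pair B x y ^ 2) ∧
  (∀ x ∈ W, (∀ y ∈ W, pair B x y = 0) → x = 0)

/-- The lattice is hyperbolic: rank `n > 1` and signature `(1, n-1)`. -/
def IsHyperbolic (B : Matrix (Fin n) (Fin n) ℤ) : Prop :=
  1 < n ∧ IsHypOn B ⊤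

/-- `P` is a positive cone: a connected component of the set of positive-norm
vectors of `L ⊗ ℝ`. -/
def IsPosCone (B : Matrix (Fin n) (Fin n) ℤ) (P : Set (Fin n → ℝ)) : Prop :=
  ∃ x, 0 < pair B x x ∧ P = connectedComponentIn {y | 0 < pair B y y} x

/-- The hyperplane `(v)⊥` of `P`. -/
def perp (B : Matrix (Fin n) (Fin n) ℤ) (P : Set (Fin n → ℝ)) (v : Fin n → ℝ) :
    Set (Fin n → ℝ) := {x ∈ P | pair B x v = 0}

/-- `V ⊆ {v ∈ L∨ : v² < 0}`. -/
def DualNeg (B : Matrix (Fin n) (Fin n) ℤ) (V : Set (Fin n → ℝ)) : Prop :=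
  ∀ v ∈ V, isDual B v ∧ pair B v v < 0

/-- Condition [V1]: the norms of the vectors of `V` are bounded. -/
def CondV1 (B : Matrix (Fin n) (Fin n) ℤ) (V : Set (Fin n → ℝ)) : Prop :=
  ∃ c : ℝ, 0 < c ∧ ∀ v ∈ V, -pair B v v < c

/-- The cone `Σ_L(Δ)`. -/
def SigmaCone (B : Matrix (Fin n) (Fin n) ℤ) (Δ : Set (Fin n → ℝ)) :
    Set (Fin n → ℝ) :=
  {x | ∀ v ∈ Δ, 0 ≤ pair B x v}

/-- `D` is a `V*`-chamber: the closure in `P` of a connected component of the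
complement in `P` of the hyperplanes `(v)⊥`, `v ∈ V`. -/
def IsChamber (B : Matrix (Fin n) (Fin n) ℤ) (P V D : Set (Fin n → ℝ)) : Prop :=
  ∃ x ∈ P, (∀ v ∈ V, pair B x v ≠ 0) ∧
    D = closure (connectedComponentIn {y ∈ P | ∀ v ∈ V, pair B y v ≠ 0} x) ∩ P

/-- `Δ` is a defining set of the chamber `D`. -/
def IsDefSet (B : Matrix (Fin n) (Fin n) ℤ) (P Δ D : Set (Fin n → ℝ)) : Prop :=
  (∀ v ∈ Δ, isDual B v ∧ pair B v v < 0) ∧ D = SigmaCone B Δ ∩ P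

/-- Condition [V3]: every `V*`-chamber has a finite defining set. -/
def CondV3 (B : Matrix (Fin n) (Fin n) ℤ) (P V : Set (Fin n → ℝ)) : Prop :=
  ∀ D, IsChamber B P V D → ∃ Δ : Set (Fin n → ℝ), Δ.Finite ∧ IsDefSet B P Δ D

/-- Condition [V4]: every boundary point of a `V*`-chamber is rational, i.e.
every nonzero norm-zero vector of the closure of a chamber is a positive real
multiple of a rational vector. -/
def CondV4 (B : Matrix (Fin n) (Fin n) ℤ) (P V : Set (Fin n → ℝ)) : Prop :=
  ∀ D, IsChamber B P V D → ∀ x ∈ closure D, x ≠ 0 → pair B x x = 0 →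
    ∃ t : ℝ, 0 < t ∧ ∃ y, isRatPt y ∧ x = t • y

/-- The action of `GL_n(ℤ)` on `L ⊗ ℝ`. -/
def act (g : (Matrix (Fin n) (Fin n) ℤ)ˣ) (x : Fin n → ℝ) : Fin n → ℝ :=
  ((g : Matrix (Fin n) (Fin n) ℤ).map ((↑) : ℤ → ℝ)).mulVec x

/-- `g` is an isometry of `L` preserving the positive cone `P`,
i.e. an element of `O⁺(L)`. -/
def InOPlus (B : Matrix (Fin n) (Fin n) ℤ) (P : Set (Fin n → ℝ))
    (g : (Matrix (Fin n) (Fin n) ℤ)ˣ) : Prop :=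
  (g : Matrix (Fin n) (Fin n) ℤ).transpose * B * (g : Matrix (Fin n) (Fin n) ℤ) = B ∧
    act g '' P = P

/-- Condition [V2]: `V` is invariant under the action of `G`. -/
def CondV2 (G : Subgroup ((Matrix (Fin n) (Fin n) ℤ)ˣ)) (V : Set (Fin n → ℝ)) : Prop :=
  ∀ g ∈ G, ∀ v ∈ V, act g v ∈ V

/-- `(v)⊥` is a wall of the chamber `D`: it is disjoint from the interior of `D`
and `(v)⊥ ∩ D` contains a nonempty open subset of `(v)⊥`. -/
def IsWall (B : Matrix (Fin n) (Fin n) ℤ) (P : Set (Fin n → ℝ)) (v : Fin n → ℝ)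
    (D : Set (Fin n → ℝ)) : Prop :=
  pair B v v < 0 ∧ perp B P v ∩ interior D = ∅ ∧
  ∃ W : Set (Fin n → ℝ), IsOpen W ∧ (W ∩ perp B P v).Nonempty ∧ W ∩ perp B P v ⊆ D

/-- `D'` is the chamber adjacent to `D` across the wall `(v)⊥`. -/
def IsAdjacent (B : Matrix (Fin n) (Fin n) ℤ) (P V : Set (Fin n → ℝ))
    (D : Set (Fin n → ℝ)) (v : Fin n → ℝ) (D' : Set (Fin n → ℝ)) : Prop :=
  IsChamber B P V D' ∧ D' ≠ D ∧
  ∃ W : Set (Fin n → ℝ), IsOpen W ∧ (W ∩ perp B P v).Nonempty ∧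
    W ∩ perp B P v ⊆ D ∩ D'

/-- `S` is (the set of real points of) a primitive sublattice of `L`. -/
def IsPrimSub (S : Submodule ℤ (Fin n → ℝ)) : Prop :=
  (∀ x ∈ S, isLat x) ∧
  ∀ x : Fin n → ℝ, isLat x → ∀ k : ℤ, k ≠ 0 → (k : ℝ) • x ∈ S → x ∈ S

/-- `xS` is the orthogonal projection of `x` to `S ⊗ ℚ`. -/
def IsProjS (B : Matrix (Fin n) (Fin n) ℤ) (S : Submodule ℤ (Fin n → ℝ))
    (xS x : Fin n → ℝ) : Prop :=
  xS ∈ Submodule.span ℚ (S : Set (Fin n → ℝ)) ∧ ∀ s ∈ S, pair B (x - xS) s = 0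

/-- The orthogonal complement `R = S⊥ ∩ L` of `S` in `L`. -/
def orthCompl (B : Matrix (Fin n) (Fin n) ℤ) (S : Submodule ℤ (Fin n → ℝ)) :
    Set (Fin n → ℝ) :=
  {x | isLat x ∧ ∀ s ∈ S, pair B x s = 0}

/-- `P` is a positive cone of the subspace `W`. -/
def IsPosConeIn (B : Matrix (Fin n) (Fin n) ℤ) (W : Set (Fin n → ℝ))
    (P : Set (Fin n → ℝ)) : Prop :=
  ∃ x ∈ W, 0 < pair B x x ∧ P = connectedComponentIn {y ∈ W | 0 < pair B y y} x


/-!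
If `x ∈ P` lies on `(v)⊥`, comparing `x` with the positive vector `f - (⟨v,f⟩ / v²) v` by the
reverse Cauchy–Schwarz inequality gives `⟨x,f⟩² / x² ≥ ⟨v,f⟩² / (-v²)`. Since `v ∈ L∨` and
`f ∈ L`, a nonzero `⟨v,f⟩` is a nonzero integer, and `-v² < c` by [V1]; so the right side
exceeds `1 / c`, and `α = 1 / c` works.
-/

lemma pair_eq_toLinearMap₂' (B : Matrix (Fin n) (Fin n) ℤ) (x y : Fin n → ℝ) :
    pair B x y = Matrix.toLinearMap₂' ℝ (B.map ((↑) : ℤ → ℝ)) x y := by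
  simp only [pair, Matrix.toLinearMap₂'_apply, Matrix.map_apply, smul_eq_mul]
  exact Finset.sum_congr rfl fun _ _ => Finset.sum_congr rfl fun _ _ => by ring

@[simp]
lemma pair_add_left (B : Matrix (Fin n) (Fin n) ℤ) (x y z : Fin n → ℝ) :
    pair B (x + y) z = pair B x z + pair B y z := by
  simp only [pair_eq_toLinearMap₂', map_add, LinearMap.add_apply]

@[simp]
lemma pair_add_right (B : Matrix (Fin n) (Fin n) ℤ) (x y z : Fin n → ℝ) :
    pair B x (y + z) = pair B x y + pair B x z := by
  simp only [pair_eq_toLinearMap₂', map_add]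

@[simp]
lemma pair_smul_left (B : Matrix (Fin n) (Fin n) ℤ) (t : ℝ) (x y : Fin n → ℝ) :
    pair B (t • x) y = t * pair B x y := by
  simp only [pair_eq_toLinearMap₂', map_smul, LinearMap.smul_apply, smul_eq_mul]

@[simp]
lemma pair_smul_right (B : Matrix (Fin n) (Fin n) ℤ) (t : ℝ) (x y : Fin n → ℝ) :
    pair B x (t • y) = t * pair B x y := by
  simp only [pair_eq_toLinearMap₂', map_smul, smul_eq_mul]

lemma pair_symm {B : Matrix (Fin n) (Fin n) ℤ} (hB : B.IsSymm) (x y : Fin n → ℝ) :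
    pair B x y = pair B y x := by
  unfold pair
  rw [Finset.sum_comm]
  refine Finset.sum_congr rfl fun j _ => Finset.sum_congr rfl fun i _ => ?_
  rw [hB.apply i j]; ring

lemma pair_pos_of_mem_posCone {B : Matrix (Fin n) (Fin n) ℤ} {P : Set (Fin n → ℝ)}
    (hP : IsPosCone B P) {x : Fin n → ℝ} (hx : x ∈ P) : 0 < pair B x x := by
  obtain ⟨x₀, -, rfl⟩ := hP
  exact connectedComponentIn_subset _ x₀ hx

lemma one_le_pair_sq_of_isDual {B : Matrix (Fin n) (Fin n) ℤ} {v f : Fin n → ℝ}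
    (hv : isDual B v) (hf : isLat f) (hvf : pair B v f ≠ 0) : 1 ≤ pair B v f ^ 2 := by
  obtain ⟨k, hk⟩ := hv.2 f hf
  rw [hk] at hvf ⊢
  have hk0 : k ≠ 0 := by exact_mod_cast hvf
  exact_mod_cast (one_le_sq_iff_one_le_abs k).mpr (Int.one_le_abs hk0)

lemma pair_sq_mul_le_of_pair_eq_zero {B : Matrix (Fin n) (Fin n) ℤ} (hB : B.IsSymm)
    (hhyp : IsHypOn B ⊤) {f v x : Fin n → ℝ} (hff : pair B f f = 0) (hvv : pair B v v < 0)
    (hx : 0 < pair B x x) (hxv : pair B x v = 0) :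
    pair B x x * pair B v f ^ 2 ≤ pair B x f ^ 2 * -pair B v v := by
  rcases eq_or_ne (pair B v f) 0 with ha | ha
  · rw [ha, zero_pow two_ne_zero, mul_zero]
    exact mul_nonneg (sq_nonneg _) (neg_nonneg.mpr hvv.le)
  set y := f + (-pair B v f / pair B v v) • v
  have hyy : pair B y y = pair B v f ^ 2 / -pair B v v := by
    simp only [y, pair_add_left, pair_add_right, pair_smul_left, pair_smul_right, hff,
      pair_symm hB f v]
    field_simp [hvv.ne]
    ring
  have hy : 0 < pair B y y := by
    rw [hyy]; exact div_pos (by positivity) (neg_pos.mpr hvv)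
  have hxy : pair B x y = pair B x f := by
    simp only [y, pair_add_right, pair_smul_right, hxv, mul_zero, add_zero]
  have hcs := hhyp.2.1 x trivial y trivial hx hy
  rwa [hxy, hyy, ← mul_div_assoc, div_le_iff₀ (neg_pos.mpr hvv)] at hcs

theorem statement_1_general {n : ℕ} (B : Matrix (Fin n) (Fin n) ℤ)
    (hB : IsEvenLat B) (hhyp : IsHyperbolic B)
    (P : Set (Fin n → ℝ)) (hP : IsPosCone B P)
    (f : Fin n → ℝ) (hfL : isLat f) (hff : pair B f f = 0)
    (V : Set (Fin n → ℝ)) (hV : DualNeg B V) (hV1 : CondV1 B V) :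
    ∃ α : ℝ, 0 < α ∧ ∀ v ∈ V, pair B v f ≠ 0 →
      ∀ x ∈ P, pair B x f ^ 2 ≤ α * pair B x x → pair B x v ≠ 0 := by
  obtain ⟨c, hc, hVc⟩ := hV1
  refine ⟨1 / c, by positivity, fun v hv hvf x hxP hxf hxv => ?_⟩
  obtain ⟨hvL, hvv⟩ := hV v hv
  have hx := pair_pos_of_mem_posCone hP hxP
  have hlow : pair B x x ≤ pair B x f ^ 2 * -pair B v v :=
    (le_mul_of_one_le_right hx.le (one_le_pair_sq_of_isDual hvL hfL hvf)).trans
      (pair_sq_mul_le_of_pair_eq_zero hB.1 hhyp.2 hff hvv hx hxv)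
  have hxf_pos : 0 < pair B x f ^ 2 :=
    pos_of_mul_pos_left (hx.trans_le hlow) (neg_nonneg.mpr hvv.le)
  have hup : pair B x f ^ 2 * c ≤ pair B x x := by
    rwa [one_div, inv_mul_eq_div, le_div_iff₀ hc] at hxf
  exact (hlow.trans_lt (mul_lt_mul_of_pos_left (hVc v hv) hxf_pos)).not_ge hup

/-- Let `L` be an even hyperbolic lattice with positive cone
`P`, let `f ∈ L` be a nonzero isotropic vector lying in the closure of `P`,
and let `V ⊆ {v ∈ L∨ : v² < 0}` satisfy condition [V1].  Then there is `α > 0`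
such that any hyperplane `(v)⊥`, `v ∈ V`, intersecting the closed horoball
`{x ∈ P : ⟨x,f⟩² ≤ α⟨x,x⟩}` satisfies `⟨v,f⟩ = 0`. -/
theorem statement_1 {n : ℕ} (B : Matrix (Fin n) (Fin n) ℤ)
    (hB : IsEvenLat B) (hhyp : IsHyperbolic B)
    (P : Set (Fin n → ℝ)) (hP : IsPosCone B P)
    (f : Fin n → ℝ) (hfL : isLat f) (hf0 : f ≠ 0) (hff : pair B f f = 0)
    (hfP : f ∈ closure P)
    (V : Set (Fin n → ℝ)) (hV : DualNeg B V) (hV1 : CondV1 B V) :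
    ∃ α : ℝ, 0 < α ∧ ∀ v ∈ V, pair B v f ≠ 0 →
      ∀ x ∈ P, pair B x f ^ 2 ≤ α * pair B x x → pair B x v ≠ 0 :=
  statement_1_general B hB hhyp P hP f hfL hff V hV hV1

end K3Aut
end

section
/- Let Λ be an even unimodular hyperbolic lattice of rank 26, let S be a primitive hyperbolic sublattice of Λ, and let R be the orthogonal complement of S in Λ, assumed negative definite. Let w ∈ Λ be a nonzero primitive vector with w² = 0, and suppose that the orthogonal projection w_S of w to S⊗ℚ satisfies (w_S)² = 0. Then w ∈ S, and R embeds isometrically into the lattice ⟨w⟩⊥/⟨w⟩, the quotient of the orthogonal complement of w in Λ by ℤw with the induced bilinear form. In particular, if R cannot be embedded into ⟨w⟩⊥/⟨w⟩ (e.g. if ⟨w⟩⊥/⟨w⟩ has no vectors of norm −2 but R does), then (w_S)² > 0. -/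
namespace K3Aut

variable {n : ℕ}

/-!
Decompose `w = w_S + q` over `ℚ`, with `w_S ∈ S ⊗ ℚ` and `q ⊥ S`; this is possible because the
form is nondegenerate on `S ⊗ ℝ`, hence on `S ⊗ ℚ`. Since `w` and `w_S` are isotropic and
`w_S ⊥ q`, also `q² = 0`. A nonzero integer multiple of `q` lies in `R`, which is negative
definite, so `q = 0`. Hence `w ∈ S ⊗ ℚ`, and by primitivity of `S`, `w ∈ S`. Then `R ⊆ ⟨w⟩⊥`,
and `R → ⟨w⟩⊥/⟨w⟩` is an isometric embedding: an element of `R` lying in `ℤw` is isotropic,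
hence zero.
-/

def bilin (K : Type*) [CommRing K] (B : Matrix (Fin n) (Fin n) ℤ) :
    LinearMap.BilinForm K (Fin n → K) :=
  Matrix.toBilin' (B.map (Int.cast : ℤ → K))

lemma pair_eq_bilin (B : Matrix (Fin n) (Fin n) ℤ) (x y : Fin n → ℝ) :
    pair B x y = bilin ℝ B x y := by
  simp [pair, bilin, Matrix.toBilin'_apply]

lemma bilin_isSymm (K : Type*) [CommRing K] {B : Matrix (Fin n) (Fin n) ℤ} (hB : B.IsSymm) :
    (bilin K B).IsSymm :=
  Matrix.isSymm_toBilin'_iff_isSymm.2 (hB.map _)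

noncomputable def vecCast : (Fin n → ℚ) →ₗ[ℚ] (Fin n → ℝ) :=
  (Algebra.linearMap ℚ ℝ).compLeft (Fin n)

@[simp] lemma vecCast_apply (x : Fin n → ℚ) (i : Fin n) : vecCast x i = (x i : ℝ) := rfl

lemma vecCast_injective : Function.Injective (vecCast (n := n)) :=
  fun _ _ h => funext fun i => by simpa using congrFun h i

lemma pair_vecCast (B : Matrix (Fin n) (Fin n) ℤ) (x y : Fin n → ℚ) :
    pair B (vecCast x) (vecCast y) = bilin ℚ B x y := by
  simp [pair_eq_bilin, bilin, Matrix.toBilin'_apply]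

lemma exists_vecCast_eq_of_isLat {x : Fin n → ℝ} (hx : isLat x) : ∃ y, vecCast y = x := by
  choose k hk using hx
  exact ⟨fun i => k i, funext fun i => by simp [hk]⟩

lemma exists_isLat_vecCast_zsmul (y : Fin n → ℚ) : ∃ N : ℤ, N ≠ 0 ∧ isLat (vecCast (N • y)) := by
  obtain ⟨⟨N, hN⟩, hy⟩ := IsLocalization.exist_integer_multiples_of_finite (nonZeroDivisors ℤ) y
  refine ⟨N, nonZeroDivisors.ne_zero hN, fun i => ?_⟩
  obtain ⟨k, hk⟩ := hy i
  exact ⟨k, by simpa using congrArg (Rat.cast : ℚ → ℝ) hk.symm⟩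

lemma exists_zsmul_mem_of_mem_span_rat {V : Type*} [AddCommGroup V] [Module ℚ V]
    {S : Submodule ℤ V} {x : V} (hx : x ∈ Submodule.span ℚ (S : Set V)) :
    ∃ m : ℤ, m ≠ 0 ∧ m • x ∈ S := by
  induction hx using Submodule.span_induction with
  | mem x hx => exact ⟨1, one_ne_zero, by simpa using hx⟩
  | zero => exact ⟨1, one_ne_zero, by simp⟩
  | add x y _ _ hx hy =>
    obtain ⟨a, ha, hax⟩ := hx
    obtain ⟨b, hb, hby⟩ := hy
    refine ⟨a * b, mul_ne_zero ha hb, ?_⟩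
    rw [smul_add, mul_smul, smul_comm a b x, mul_smul]
    exact add_mem (S.smul_mem b hax) (S.smul_mem a hby)
  | smul c x _ hx =>
    obtain ⟨m, hm, hmx⟩ := hx
    refine ⟨c.den * m, mul_ne_zero (by exact_mod_cast c.den_ne_zero) hm, ?_⟩
    have : (c.den * m : ℤ) • c • x = c.num • m • x := by
      rw [← Int.cast_smul_eq_zsmul ℚ, ← Int.cast_smul_eq_zsmul ℚ c.num,
        ← Int.cast_smul_eq_zsmul ℚ m, smul_smul, smul_smul]
      congr 1
      push_cast
      rw [mul_comm (c.den : ℚ), mul_assoc, Rat.den_mul_eq_num, mul_comm]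
    rw [this]
    exact S.smul_mem _ hmx

section Sublattice

variable {B : Matrix (Fin n) (Fin n) ℤ} {S : Submodule ℤ (Fin n → ℝ)}

/-- `S ⊗ ℚ`, as a subspace of `ℚⁿ`. -/
def ratSpan (S : Submodule ℤ (Fin n → ℝ)) : Submodule ℚ (Fin n → ℚ) :=
  Submodule.span ℚ (vecCast ⁻¹' S)

lemma vecCast_mem_span_of_mem_ratSpan {p : Fin n → ℚ} (hp : p ∈ ratSpan S) :
    vecCast p ∈ Submodule.span ℚ (S : Set (Fin n → ℝ)) := by
  have : (ratSpan S).map vecCast ≤ Submodule.span ℚ (S : Set (Fin n → ℝ)) := by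
    rw [ratSpan, Submodule.map_span]
    exact Submodule.span_mono (Set.image_preimage_subset _ _)
  exact this ⟨p, hp, rfl⟩

lemma exists_mem_ratSpan_vecCast_eq (hSlat : ∀ s ∈ S, isLat s) {s : Fin n → ℝ} (hs : s ∈ S) :
    ∃ y ∈ ratSpan S, vecCast y = s := by
  obtain ⟨y, rfl⟩ := exists_vecCast_eq_of_isLat (hSlat s hs)
  exact ⟨y, Submodule.subset_span hs, rfl⟩

lemma pair_eq_zero_of_mem_span {x : Fin n → ℝ} (hx : ∀ s ∈ S, pair B x s = 0) :
    ∀ z ∈ Submodule.span ℝ (S : Set (Fin n → ℝ)), pair B x z = 0 := by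
  simp only [pair_eq_bilin] at hx ⊢
  exact fun z hz => (Submodule.span_le (p := LinearMap.ker (bilin ℝ B x))).2 hx hz

lemma isCompl_ratSpan_orthogonal (hB : B.IsSymm) (hSlat : ∀ s ∈ S, isLat s)
    (hSnd : ∀ x ∈ Submodule.span ℝ (S : Set (Fin n → ℝ)),
      (∀ y ∈ Submodule.span ℝ (S : Set (Fin n → ℝ)), pair B x y = 0) → x = 0) :
    IsCompl (ratSpan S) ((bilin ℚ B).orthogonal (ratSpan S)) := by
  have hrefl := (bilin_isSymm ℚ hB).isRefl
  refine (bilin ℚ B).isCompl_orthogonal_of_restrict_nondegenerate hrefl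
    ((hrefl.domRestrict _).nondegenerate_iff_separatingLeft.2 fun x hx => ?_)
  have hxS : ∀ s ∈ S, pair B (vecCast x) s = 0 := by
    intro s hs
    obtain ⟨y, hy, rfl⟩ := exists_mem_ratSpan_vecCast_eq hSlat hs
    rw [pair_vecCast]
    exact_mod_cast hx ⟨y, hy⟩
  have hxspan := Submodule.span_le_restrictScalars ℚ ℝ _ (vecCast_mem_span_of_mem_ratSpan x.2)
  exact Subtype.ext (vecCast_injective
    ((hSnd _ hxspan (pair_eq_zero_of_mem_span hxS)).trans (map_zero _).symm))

lemma pair_vecCast_eq_zero_of_mem_orthogonal (hB : B.IsSymm) (hSlat : ∀ s ∈ S, isLat s)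
    {q : Fin n → ℚ} (hq : q ∈ (bilin ℚ B).orthogonal (ratSpan S)) :
    ∀ s ∈ S, pair B (vecCast q) s = 0 := by
  intro s hs
  obtain ⟨y, hy, rfl⟩ := exists_mem_ratSpan_vecCast_eq hSlat hs
  rw [pair_vecCast, (bilin_isSymm ℚ hB).eq, hq y hy, Rat.cast_zero]

lemma eq_zero_of_isotropic_of_orthogonal
    (hRneg : ∀ x : Fin n → ℝ, isLat x → (∀ s ∈ S, pair B x s = 0) → x ≠ 0 → pair B x x < 0)
    {q : Fin n → ℚ} (hqS : ∀ s ∈ S, pair B (vecCast q) s = 0) (hqq : bilin ℚ B q q = 0) :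
    q = 0 := by
  obtain ⟨N, hN, hlat⟩ := exists_isLat_vecCast_zsmul q
  have hNq : vecCast (N • q) = 0 := by
    by_contra hne
    refine (hRneg _ hlat (fun s hs => ?_) hne).ne ?_
    · rw [map_zsmul, pair_eq_bilin, map_zsmul, LinearMap.smul_apply, ← pair_eq_bilin, hqS s hs,
        smul_zero]
    · rw [pair_vecCast, map_zsmul, map_zsmul, LinearMap.smul_apply, hqq, smul_zero, smul_zero,
        Rat.cast_zero]
  exact (smul_eq_zero.1 (vecCast_injective (hNq.trans (map_zero _).symm))).resolve_left hN

theorem mem_of_isotropic_of_isotropic_projection (hB : B.IsSymm) (hSprim : IsPrimSub S)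
    (hSnd : ∀ x ∈ Submodule.span ℝ (S : Set (Fin n → ℝ)),
      (∀ y ∈ Submodule.span ℝ (S : Set (Fin n → ℝ)), pair B x y = 0) → x = 0)
    (hRneg : ∀ x : Fin n → ℝ, isLat x → (∀ s ∈ S, pair B x s = 0) → x ≠ 0 → pair B x x < 0)
    {w : Fin n → ℝ} (hw : isLat w) (hww : pair B w w = 0)
    (hwS : ∀ wS, IsProjS B S wS w → pair B wS wS = 0) :
    w ∈ S := by
  obtain ⟨wq, rfl⟩ := exists_vecCast_eq_of_isLat hw
  have hdecomp : wq ∈ ratSpan S ⊔ (bilin ℚ B).orthogonal (ratSpan S) := by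
    rw [(isCompl_ratSpan_orthogonal hB hSprim.1 hSnd).sup_eq_top]
    trivial
  obtain ⟨p, hp, q, hq, rfl⟩ := Submodule.mem_sup.1 hdecomp
  have hqS := pair_vecCast_eq_zero_of_mem_orthogonal hB hSprim.1 hq
  have hpp : bilin ℚ B p p = 0 := by
    have := hwS (vecCast p) ⟨vecCast_mem_span_of_mem_ratSpan hp, by simpa using hqS⟩
    rwa [pair_vecCast, Rat.cast_eq_zero] at this
  have hqq : bilin ℚ B q q = 0 := by
    rw [pair_vecCast, Rat.cast_eq_zero] at hww
    simpa [hpp, hq p hp, (bilin_isSymm ℚ hB).eq q p] using hww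
  obtain rfl : q = 0 := eq_zero_of_isotropic_of_orthogonal hRneg hqS hqq
  obtain ⟨m, hm, hmS⟩ :=
    exists_zsmul_mem_of_mem_span_rat (vecCast_mem_span_of_mem_ratSpan (by simpa using hp))
  exact hSprim.2 _ hw m hm (by simpa [Int.cast_smul_eq_zsmul] using hmS)

end Sublattice

theorem statement_12_general (B : Matrix (Fin 26) (Fin 26) ℤ)
    (hB : IsEvenLat B)
    (S : Submodule ℤ (Fin 26 → ℝ)) (hSprim : IsPrimSub S)
    (hShyp : IsHypOn B (Submodule.span ℝ (S : Set (Fin 26 → ℝ))))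
    (hRneg : ∀ x : Fin 26 → ℝ, isLat x → (∀ s ∈ S, pair B x s = 0) → x ≠ 0 →
      pair B x x < 0)
    (w : Fin 26 → ℝ) (hw : isLat w)
    (hww : pair B w w = 0)
    (hwS : ∀ wS, IsProjS B S wS w → pair B wS wS = 0) :
    w ∈ S ∧
    ∃ ψ : (Fin 26 → ℝ) → (Fin 26 → ℝ),
      (∀ x ∈ orthCompl B S, isLat (ψ x) ∧ pair B (ψ x) w = 0) ∧
      (∀ x ∈ orthCompl B S, ∀ y ∈ orthCompl B S,
        ∃ k : ℤ, ψ (x + y) = ψ x + ψ y + (k : ℝ) • w) ∧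
      (∀ x ∈ orthCompl B S, ∀ y ∈ orthCompl B S,
        pair B (ψ x) (ψ y) = pair B x y) ∧
      (∀ x ∈ orthCompl B S, (∃ k : ℤ, ψ x = (k : ℝ) • w) → x = 0) := by
  have hwmem : w ∈ S :=
    mem_of_isotropic_of_isotropic_projection hB.1 hSprim hShyp.2.2 hRneg hw hww hwS
  refine ⟨hwmem, id, fun x hx => ⟨hx.1, hx.2 w hwmem⟩, fun _ _ _ _ => ⟨0, by simp⟩,
    fun _ _ _ _ => rfl, ?_⟩
  rintro x hx ⟨k, rfl⟩
  by_contra hne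
  refine (hRneg _ hx.1 hx.2 hne).ne' ?_
  rw [pair_eq_bilin] at hww ⊢
  simp [hww]

/-- Let `Λ` be an even unimodular hyperbolic lattice of rank
`26`, `S` a primitive hyperbolic sublattice with negative-definite orthogonal
complement `R`.  Let `w ∈ Λ` be a nonzero primitive isotropic vector with
`(w_S)² = 0`.  Then `w ∈ S` and `R` embeds isometrically into `⟨w⟩⊥/⟨w⟩`
(the embedding being given by a lift `ψ` with values in `⟨w⟩⊥ ⊆ Λ`, additive
and injective modulo `ℤw`, preserving the induced form). -/
theorem statement_12 (B : Matrix (Fin 26) (Fin 26) ℤ)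
    (hB : IsEvenLat B) (huni : IsUnit B.det) (hhyp : IsHyperbolic B)
    (S : Submodule ℤ (Fin 26 → ℝ)) (hSprim : IsPrimSub S)
    (hShyp : IsHypOn B (Submodule.span ℝ (S : Set (Fin 26 → ℝ))))
    (hRneg : ∀ x : Fin 26 → ℝ, isLat x → (∀ s ∈ S, pair B x s = 0) → x ≠ 0 →
      pair B x x < 0)
    (w : Fin 26 → ℝ) (hw : isLat w) (hw0 : w ≠ 0)
    (hwprim : ∀ x : Fin 26 → ℝ, isLat x → ∀ k : ℤ, (k : ℝ) • x = w → IsUnit k)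
    (hww : pair B w w = 0)
    (hwS : ∀ wS, IsProjS B S wS w → pair B wS wS = 0) :
    w ∈ S ∧
    ∃ ψ : (Fin 26 → ℝ) → (Fin 26 → ℝ),
      (∀ x ∈ orthCompl B S, isLat (ψ x) ∧ pair B (ψ x) w = 0) ∧
      (∀ x ∈ orthCompl B S, ∀ y ∈ orthCompl B S,
        ∃ k : ℤ, ψ (x + y) = ψ x + ψ y + (k : ℝ) • w) ∧
      (∀ x ∈ orthCompl B S, ∀ y ∈ orthCompl B S,
        pair B (ψ x) (ψ y) = pair B x y) ∧
      (∀ x ∈ orthCompl B S, (∃ k : ℤ, ψ x = (k : ℝ) • w) → x = 0) :=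
  statement_12_general B hB S hSprim hShyp hRneg w hw hww hwS

end K3Aut
end

section
/- Let Λ be an even unimodular hyperbolic lattice with positive cone P_Λ, let S be a primitive hyperbolic sublattice of Λ whose positive cone P_S = P_Λ ∩ (S⊗ℝ) is nonempty, and let R be the orthogonal complement of S in Λ, assumed negative definite. Suppose that every R_Λ*-chamber 𝒟 of P_Λ (chamber for the hyperplanes of the (−2)-vectors of Λ) has the property that every nonzero vector of norm 0 in the closure of 𝒟 in Λ⊗ℝ is a positive real multiple of a vector of Λ⊗ℚ. Then every Roots_{Λ|S}*-chamber D of P_S (chamber for the family of hyperplanes {P_S ∩ (r)⊥ : r ∈ Λ, r² = −2, P_S ∩ (r)⊥ ≠ ∅}) has the property that every nonzero vector of norm 0 in the closure of D in S⊗ℝ is a positive real multiple of a vector of S⊗ℚ; that is, Roots_{Λ|S} satisfies condition [V4]. -/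
namespace K3Aut

variable {n : ℕ}

/-- Coercion ℚⁿ → ℝⁿ as a ℚ-linear map. -/
def coeQR (n : ℕ) : (Fin n → ℚ) →ₗ[ℚ] (Fin n → ℝ) where
  toFun w i := (w i : ℝ)
  map_add' a b := by funext i; simp
  map_smul' q a := by
    funext i
    simp [Rat.smul_def]

lemma rat_mem_span_of_mem_real_span {n : ℕ} {T : Set (Fin n → ℝ)}
    (hT : ∀ s ∈ T, isRatPt s) {y : Fin n → ℝ} (hy : isRatPt y)
    (hmem : y ∈ Submodule.span ℝ T) : y ∈ Submodule.span ℚ T := by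
  classical
  choose yq hyq using hy
  have hcy : coeQR n yq = y := by funext i; exact (hyq i).symm
  set Tq : Set (Fin n → ℚ) := coeQR n ⁻¹' T with hTqdef
  have hTim : ∀ s ∈ T, ∃ w ∈ Tq, coeQR n w = s := by
    intro s hs
    choose sq hsq using hT s hs
    have hcs : coeQR n sq = s := by funext i; exact (hsq i).symm
    exact ⟨sq, by simp [Tq, Set.mem_preimage, hcs, hs], hcs⟩
  have key : yq ∈ Submodule.span ℚ Tq := by
    by_contra hnot
    obtain ⟨f, hf0, hfbot⟩ :=
      (Submodule.span ℚ Tq).exists_dual_map_eq_bot_of_notMem hnot inferInstance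
    have hfzero : ∀ w ∈ Submodule.span ℚ Tq, f w = 0 := by
      intro w hw
      have : f w ∈ Submodule.map f (Submodule.span ℚ Tq) := ⟨w, hw, rfl⟩
      rwa [hfbot, Submodule.mem_bot] at this
    set a : Fin n → ℚ := fun i => f (fun j => if i = j then 1 else 0) with ha
    have hfsum : ∀ w : Fin n → ℚ, f w = ∑ i, w i * a i := by
      intro w
      conv_lhs => rw [pi_eq_sum_univ w]
      rw [map_sum]
      exact Finset.sum_congr rfl fun i _ => by rw [map_smul]; simp [ha, smul_eq_mul]
    set g : (Fin n → ℝ) →ₗ[ℝ] ℝ := ∑ i, ((a i : ℝ)) • LinearMap.proj i with hg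
    have hgc : ∀ w : Fin n → ℚ, g (coeQR n w) = ((f w : ℚ) : ℝ) := by
      intro w
      rw [hfsum w]
      push_cast
      simp [hg, LinearMap.sum_apply, LinearMap.smul_apply, coeQR, mul_comm]
    have hgT : ∀ s ∈ T, g s = 0 := by
      intro s hs
      obtain ⟨w, hw, rfl⟩ := hTim s hs
      rw [hgc w, hfzero w (Submodule.subset_span hw)]
      norm_num
    have hgy : g y = 0 := by
      have hle : Submodule.span ℝ T ≤ LinearMap.ker g :=
        Submodule.span_le.mpr fun s hs => LinearMap.mem_ker.mpr (hgT s hs)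
      exact LinearMap.mem_ker.mp (hle hmem)
    rw [← hcy, hgc yq] at hgy
    exact hf0 (by exact_mod_cast hgy)
  have hmap : y ∈ Submodule.map (coeQR n) (Submodule.span ℚ Tq) := ⟨yq, key, hcy⟩
  rw [Submodule.map_span] at hmap
  exact Submodule.span_mono (Set.image_preimage_subset _ _) hmap

/-- **Proposition: `Roots_{Λ|S}` satisfies [V4].**  Let `Λ` be
an even unimodular hyperbolic lattice with positive cone `P_Λ`, `S` a
primitive hyperbolic sublattice whose positive cone `P_S = P_Λ ∩ (S ⊗ ℝ)` is
nonempty, and `R` the (negative-definite) orthogonal complement of `S`.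
If every `R_Λ*`-chamber has only rational boundary points, then every
`Roots_{Λ|S}*`-chamber of `P_S` has only rational boundary points (that is,
`Roots_{Λ|S}` satisfies condition [V4]). -/
theorem statement_17 {n : ℕ} (B : Matrix (Fin n) (Fin n) ℤ)
    (hB : IsEvenLat B) (huni : IsUnit B.det) (hhyp : IsHyperbolic B)
    (PΛ : Set (Fin n → ℝ)) (hPΛ : IsPosCone B PΛ)
    (S : Submodule ℤ (Fin n → ℝ)) (hSprim : IsPrimSub S)
    (hShyp : IsHypOn B (Submodule.span ℝ (S : Set (Fin n → ℝ))))
    (PS : Set (Fin n → ℝ))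
    (hPS : PS = PΛ ∩ (Submodule.span ℝ (S : Set (Fin n → ℝ)) : Set (Fin n → ℝ)))
    (hPSne : PS.Nonempty)
    (hRneg : ∀ x : Fin n → ℝ, isLat x → (∀ s ∈ S, pair B x s = 0) → x ≠ 0 →
      pair B x x < 0)
    (hV4Λ : ∀ D, IsChamber B PΛ {r : Fin n → ℝ | isLat r ∧ pair B r r = -2} D →
      ∀ x ∈ closure D, x ≠ 0 → pair B x x = 0 →
        ∃ t : ℝ, 0 < t ∧ ∃ y, isRatPt y ∧ x = t • y) :
    ∀ D, IsChamber B PS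
        {r : Fin n → ℝ | isLat r ∧ pair B r r = -2 ∧ (perp B PS r).Nonempty} D →
      ∀ x ∈ closure D, x ≠ 0 → pair B x x = 0 →
        ∃ t : ℝ, 0 < t ∧ ∃ y ∈ Submodule.span ℚ (S : Set (Fin n → ℝ)), x = t • y := by
  intro D hD x hx hx0 hxx
  obtain ⟨x₀, hx₀PS, hx₀v, hDeq⟩ := hD
  have hPSsub : PS ⊆ PΛ := by rw [hPS]; exact Set.inter_subset_left
  set FS := {y ∈ PS | ∀ v ∈ {r : Fin n → ℝ | isLat r ∧ pair B r r = -2 ∧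
      (perp B PS r).Nonempty}, pair B y v ≠ 0} with hFS
  set FΛ := {y ∈ PΛ | ∀ v ∈ {r : Fin n → ℝ | isLat r ∧ pair B r r = -2},
      pair B y v ≠ 0} with hFΛ
  have hFsub : FS ⊆ FΛ := by
    rintro y ⟨hyPS, hyv⟩
    refine ⟨hPSsub hyPS, ?_⟩
    rintro r ⟨hr1, hr2⟩
    by_cases hne : (perp B PS r).Nonempty
    · exact hyv r ⟨hr1, hr2, hne⟩
    · intro h0
      exact hne ⟨y, hyPS, h0⟩
  have hx₀FS : x₀ ∈ FS := ⟨hx₀PS, hx₀v⟩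
  have hCsub : connectedComponentIn FS x₀ ⊆ connectedComponentIn FΛ x₀ :=
    isPreconnected_connectedComponentIn.subset_connectedComponentIn
      (mem_connectedComponentIn hx₀FS)
      ((connectedComponentIn_subset FS x₀).trans hFsub)
  set 𝒟 := closure (connectedComponentIn FΛ x₀) ∩ PΛ with h𝒟
  have hch : IsChamber B PΛ {r : Fin n → ℝ | isLat r ∧ pair B r r = -2} 𝒟 :=
    ⟨x₀, (hFsub hx₀FS).1, (hFsub hx₀FS).2, rfl⟩
  have hx𝒟 : x ∈ closure 𝒟 := by
    have h1 : closure D ⊆ closure (connectedComponentIn FS x₀) := by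
      rw [hDeq]
      calc closure (closure (connectedComponentIn FS x₀) ∩ PS)
          ⊆ closure (closure (connectedComponentIn FS x₀)) :=
            closure_mono Set.inter_subset_left
        _ = closure (connectedComponentIn FS x₀) := closure_closure
    have h2 : connectedComponentIn FΛ x₀ ⊆ 𝒟 :=
      Set.subset_inter subset_closure
        ((connectedComponentIn_subset FΛ x₀).trans (Set.sep_subset _ _))
    exact (h1.trans (closure_mono hCsub)).trans (closure_mono h2) hx
  obtain ⟨t, ht, y, hyrat, hxy⟩ := hV4Λ 𝒟 hch x hx𝒟 hx0 hxx
  refine ⟨t, ht, y, ?_, hxy⟩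
  have hxspan : x ∈ Submodule.span ℝ (S : Set (Fin n → ℝ)) := by
    have hDsub : D ⊆ (Submodule.span ℝ (S : Set (Fin n → ℝ)) : Set (Fin n → ℝ)) := by
      rw [hDeq, hPS]
      intro z hz
      exact hz.2.2
    exact closure_minimal hDsub (Submodule.closed_of_finiteDimensional _) hx
  have hyspan : y ∈ Submodule.span ℝ (S : Set (Fin n → ℝ)) := by
    have hyx : y = t⁻¹ • x := by
      rw [hxy, smul_smul, inv_mul_cancel₀ ht.ne', one_smul]
    rw [hyx]
    exact Submodule.smul_mem _ _ hxspan
  refine rat_mem_span_of_mem_real_span ?_ hyrat hyspan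
  intro s hs i
  obtain ⟨k, hk⟩ := hSprim.1 s hs i
  exact ⟨(k : ℚ), by rw [hk]; norm_num⟩

end K3Aut
end
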